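/- arXiv:2408.12402 — 5 statements merged into one kernel-verified Lean document; each statement's English description precedes it below -/
import Mathlib

section
/- For any instance of the SPP with common utility (strictly positive utilities u(ℓ,s) > 0 for real s, all distinct, and u(ℓ,V) = 0), the greedy algorithm—repeatedly selecting the globally maximum remaining utility pair (ℓ*, s*), matching φ(ℓ*) := s*, then zeroing out all remaining pairs involving ℓ* and all pairs (ℓ, s*) for ℓ adjacent to ℓ*—terminates with a harmonious polygamy. -/
def Harmonious {L S : Type*} (C : L → L → Prop) (V : S) (φ : L → S) : Prop :=
  ∀ ℓ₁ ℓ₂ : L, C ℓ₁ ℓ₂ → φ ℓ₁ ≠ V → φ ℓ₁ ≠ φ ℓ₂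

/-- The pair of globally maximal current utility. -/
noncomputable def argmaxPair {L S : Type*} [Fintype L] [Fintype S] [Nonempty L] [Nonempty S]
    (w : L → S → ℝ) : L × S :=
  (Finset.exists_max_image (Finset.univ : Finset (L × S)) (fun p => w p.1 p.2)
    Finset.univ_nonempty).choose

/-- One pass of the greedy DSSAR algorithm with fuel `n`: pick the maximal
remaining utility pair `(ℓ*, s*)`; if its value is positive, match `φ(ℓ*) := s*`,
zero out the row of `ℓ*` and the entries `(ℓ, s*)` for `ℓ` adjacent to `ℓ*`,
and recurse; otherwise stop. -/
noncomputable def greedyAux {L S : Type*} [Fintype L] [Fintype S] [Nonempty L] [Nonempty S]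
    [DecidableEq L] [DecidableEq S] (C : L → L → Prop) [DecidableRel C] (V : S) :
    ℕ → (L → S → ℝ) → (L → S) → (L → S)
  | 0, _, φ => φ
  | n + 1, w, φ =>
    let p := argmaxPair w
    if 0 < w p.1 p.2 then
      greedyAux C V n
        (fun ℓ s => if ℓ = p.1 then 0
          else if s = p.2 ∧ (C ℓ p.1 ∨ C p.1 ℓ) then 0
          else w ℓ s)
        (Function.update φ p.1 p.2)
    else φ

/-- The DSSAR greedy algorithm: start from the all-virtual matching and run
at most `|L|` greedy steps. -/
noncomputable def dssar {L S : Type*} [Fintype L] [Fintype S] [Nonempty L] [Nonempty S]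
    [DecidableEq L] [DecidableEq S] (C : L → L → Prop) [DecidableRel C] (V : S)
    (u : L → S → ℝ) : L → S :=
  greedyAux C V (Fintype.card L) u (fun _ => V)

theorem greedy_inv {L S : Type*} [Fintype L] [Fintype S] [Nonempty L] [Nonempty S]
    [DecidableEq L] [DecidableEq S] (C : L → L → Prop) [DecidableRel C]
    (hsymm : Symmetric C) (hirr : Irreflexive C) (V : S) :
    ∀ (n : ℕ) (w : L → S → ℝ) (φ : L → S),
      (∀ ℓ s, φ ℓ ≠ V → w ℓ s ≤ 0) →
      (∀ ℓ₁ ℓ₂, C ℓ₁ ℓ₂ → φ ℓ₂ ≠ V → w ℓ₁ (φ ℓ₂) ≤ 0) →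
      (∀ ℓ, w ℓ V ≤ 0) →
      Harmonious C V φ →
      Harmonious C V (greedyAux C V n w φ)
  | 0, w, φ, _, _, _, hc => hc
  | n+1, w, φ, ha, hb, hd, hc => by
    rw [greedyAux]
    set p := argmaxPair w with hp
    by_cases hpos : 0 < w p.1 p.2
    · simp only [hpos, if_true]
      have hφp : φ p.1 = V := by
        by_contra h
        exact absurd (ha p.1 p.2 h) (not_le.mpr hpos)
      have hsV : p.2 ≠ V := fun h => absurd (h ▸ hd p.1) (not_le.mpr hpos)
      set w' : L → S → ℝ := fun ℓ s => if ℓ = p.1 then 0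
          else if s = p.2 ∧ (C ℓ p.1 ∨ C p.1 ℓ) then 0
          else w ℓ s with hw'
      set φ' := Function.update φ p.1 p.2 with hφ'
      have hw'le : ∀ ℓ s, w' ℓ s ≤ 0 ∨ w' ℓ s = w ℓ s := by
        intro ℓ s
        simp only [hw']
        split_ifs with h1 h2
        · exact Or.inl le_rfl
        · exact Or.inl le_rfl
        · exact Or.inr rfl
      apply greedy_inv C hsymm hirr V n
      · -- (a)
        intro ℓ s hℓ
        by_cases hℓp : ℓ = p.1
        · simp [hw', hℓp]
        · have : φ ℓ ≠ V := by rwa [hφ', Function.update_of_ne hℓp] at hℓ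
          rcases hw'le ℓ s with h | h
          · exact h
          · rw [h]; exact ha ℓ s this
      · -- (b)
        intro ℓ₁ ℓ₂ hC hℓ₂
        by_cases hℓ₂p : ℓ₂ = p.1
        · have hC' : C ℓ₁ p.1 := hℓ₂p ▸ hC
          rw [hφ', hℓ₂p, Function.update_self]
          have hℓ₁ : ℓ₁ ≠ p.1 := fun h => hirr p.1 (h ▸ hC')
          simp [hw', hℓ₁, hC']
        · have hφℓ₂ : φ' ℓ₂ = φ ℓ₂ := by rw [hφ', Function.update_of_ne hℓ₂p]
          rw [hφℓ₂]
          rw [hφℓ₂] at hℓ₂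
          rcases hw'le ℓ₁ (φ ℓ₂) with h | h
          · exact h
          · rw [h]; exact hb ℓ₁ ℓ₂ hC hℓ₂
      · -- (d)
        intro ℓ
        rcases hw'le ℓ V with h | h
        · exact h
        · rw [h]; exact hd ℓ
      · -- (c)
        intro ℓ₁ ℓ₂ hC hℓ₁
        by_cases h1 : ℓ₁ = p.1
        · have hC' : C p.1 ℓ₂ := h1 ▸ hC
          have hℓ₂ : ℓ₂ ≠ p.1 := fun h => hirr p.1 (h ▸ hC')
          rw [hφ', h1, Function.update_self, Function.update_of_ne hℓ₂]
          by_cases h2 : φ ℓ₂ = V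
          · rw [h2]; exact hsV
          · intro heq
            have := hb p.1 ℓ₂ hC' h2
            rw [← heq] at this
            exact absurd this (not_le.mpr hpos)
        · rw [hφ', Function.update_of_ne h1] at hℓ₁ ⊢
          by_cases h2 : ℓ₂ = p.1
          · rw [h2, Function.update_self]
            intro heq
            have := hb p.1 ℓ₁ (hsymm (h2 ▸ hC)) hℓ₁
            rw [heq] at this
            exact absurd this (not_le.mpr hpos)
          · rw [Function.update_of_ne h2]
            exact hc ℓ₁ ℓ₂ hC hℓ₁
    · simp only [hpos, if_false]
      exact hc

/-- The greedy DSSAR algorithm terminates with a harmonious polygamy. -/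
theorem stmt4 {L S : Type*} [Fintype L] [Fintype S] [Nonempty L] [Nonempty S]
    [DecidableEq L] [DecidableEq S] (C : L → L → Prop) [DecidableRel C]
    (hsymm : Symmetric C) (hirr : Irreflexive C) (V : S)
    (u : L → S → ℝ)
    (hpos : ∀ ℓ s, s ≠ V → 0 < u ℓ s)
    (huV : ∀ ℓ, u ℓ V = 0)
    (hdist : ∀ ℓ s ℓ' s', s ≠ V → s' ≠ V → (ℓ, s) ≠ (ℓ', s') → u ℓ s ≠ u ℓ' s') :
    Harmonious C V (dssar C V u) := by
  apply greedy_inv C hsymm hirr V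
  · intro ℓ s h; exact absurd rfl h
  · intro ℓ₁ ℓ₂ _ h; exact absurd rfl h
  · intro ℓ; exact le_of_eq (huV ℓ)
  · intro ℓ₁ ℓ₂ _ h; exact absurd rfl h
end

section
/- The matching produced by the greedy maximum-utility algorithm (DSSAR) on an SPP instance with common utility is a stable polygamy: for every ℓ₁ ∈ L and real s ∈ S with u(ℓ₁, s) > u(ℓ₁, φ(ℓ₁)), there exists ℓ₂ adjacent to ℓ₁ with φ(ℓ₂) = s and u(ℓ₂, s) > u(ℓ₁, s). -/
lemma argmaxPair_spec {L S : Type*} [Fintype L] [Fintype S] [Nonempty L] [Nonempty S]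
    (w : L → S → ℝ) : ∀ ℓ s, w ℓ s ≤ w (argmaxPair w).1 (argmaxPair w).2 := by
  intro ℓ s
  have h := (Finset.exists_max_image (Finset.univ : Finset (L × S)) (fun p => w p.1 p.2)
    Finset.univ_nonempty).choose_spec
  exact h.2 (ℓ, s) (Finset.mem_univ _)

lemma greedy_key {L S : Type*} [Fintype L] [Fintype S] [Nonempty L] [Nonempty S]
    [DecidableEq L] [DecidableEq S] (C : L → L → Prop) [DecidableRel C]
    (hsymm : Symmetric C) (hirr : Irreflexive C) (V : S)
    (u : L → S → ℝ)
    (hpos : ∀ ℓ s, s ≠ V → 0 < u ℓ s)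
    (huV : ∀ ℓ, u ℓ V = 0)
    (hdist : ∀ ℓ s ℓ' s', s ≠ V → s' ≠ V → (ℓ, s) ≠ (ℓ', s') → u ℓ s ≠ u ℓ' s') :
    ∀ n (w : L → S → ℝ) (φ : L → S),
    (∀ ℓ s, w ℓ s = u ℓ s ∨ w ℓ s = 0) →
    (∀ ℓ, φ ℓ ≠ V → ∀ s, w ℓ s = 0) →
    (∀ ℓ s, s ≠ V → w ℓ s = 0 →
      u ℓ s ≤ u ℓ (φ ℓ) ∨ ∃ ℓ₂, C ℓ ℓ₂ ∧ φ ℓ₂ = s ∧ u ℓ s < u ℓ₂ s) →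
    Harmonious C V φ →
    (∀ ℓ ℓ₂, C ℓ ℓ₂ → φ ℓ₂ ≠ V → w ℓ (φ ℓ₂) = 0) →
    (Finset.univ.filter (fun ℓ => φ ℓ = V)).card ≤ n →
    Harmonious C V (greedyAux C V n w φ) ∧
    ∀ ℓ₁ s, s ≠ V → u ℓ₁ (greedyAux C V n w φ ℓ₁) < u ℓ₁ s →
      ∃ ℓ₂, C ℓ₁ ℓ₂ ∧ greedyAux C V n w φ ℓ₂ = s ∧ u ℓ₁ s < u ℓ₂ s := by
  intro n
  induction n with
  | zero =>
    intro w φ inv1 inv2 inv3 inv4 inv5 hcard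
    have hall : ∀ ℓ, φ ℓ ≠ V := by
      intro ℓ hℓ
      have : (Finset.univ.filter (fun ℓ => φ ℓ = V)).Nonempty := ⟨ℓ, by simp [hℓ]⟩
      have := Finset.card_pos.mpr this
      omega
    refine ⟨inv4, ?_⟩
    intro ℓ₁ s hs hlt
    have hw0 : w ℓ₁ s = 0 := inv2 ℓ₁ (hall ℓ₁) s
    rcases inv3 ℓ₁ s hs hw0 with h | h
    · exact absurd h (not_le.mpr hlt)
    · exact h
  | succ n ih =>
    intro w φ inv1 inv2 inv3 inv4 inv5 hcard
    set p := argmaxPair w with hpdef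
    by_cases hp : 0 < w p.1 p.2
    · have hres : greedyAux C V (n + 1) w φ =
        greedyAux C V n
          (fun ℓ s => if ℓ = p.1 then 0
            else if s = p.2 ∧ (C ℓ p.1 ∨ C p.1 ℓ) then 0
            else w ℓ s)
          (Function.update φ p.1 p.2) := by
        rw [greedyAux]
        simp only [← hpdef, if_pos hp]
      set w' : L → S → ℝ := fun ℓ s => if ℓ = p.1 then 0
            else if s = p.2 ∧ (C ℓ p.1 ∨ C p.1 ℓ) then 0
            else w ℓ s with hw'def
      set φ' := Function.update φ p.1 p.2 with hφ'def
      have hwu : w p.1 p.2 = u p.1 p.2 := by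
        rcases inv1 p.1 p.2 with h | h
        · exact h
        · rw [h] at hp; exact absurd hp (lt_irrefl 0)
      have hp2V : p.2 ≠ V := by
        intro h
        rw [hwu, h, huV] at hp
        exact absurd hp (lt_irrefl 0)
      have hφp : φ p.1 = V := by
        by_contra h
        have := inv2 p.1 h p.2
        rw [this] at hp
        exact absurd hp (lt_irrefl 0)
      have hmax : ∀ ℓ s, w ℓ s ≤ w p.1 p.2 := argmaxPair_spec w
      -- key bound: entries still equal to u are bounded by the matched utility
      have hbound : ∀ ℓ s, w ℓ s = u ℓ s → u ℓ s ≤ u p.1 p.2 := by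
        intro ℓ s h
        rw [← hwu, ← h]; exact hmax ℓ s
      have hφ'p : φ' p.1 = p.2 := Function.update_self _ _ _
      have hφ'ne : ∀ ℓ, ℓ ≠ p.1 → φ' ℓ = φ ℓ := fun ℓ h => Function.update_of_ne h _ _
      -- transfer old inv3 conclusions to φ'
      have htrans : ∀ ℓ s, ℓ ≠ p.1 → s ≠ V → w ℓ s = 0 →
          u ℓ s ≤ u ℓ (φ' ℓ) ∨ ∃ ℓ₂, C ℓ ℓ₂ ∧ φ' ℓ₂ = s ∧ u ℓ s < u ℓ₂ s := by
        intro ℓ s hℓ hs h0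
        rcases inv3 ℓ s hs h0 with h | ⟨ℓ₂, hc, hm, hu⟩
        · left; rw [hφ'ne ℓ hℓ]; exact h
        · right
          have hℓ₂ : ℓ₂ ≠ p.1 := by
            intro he; rw [he, hφp] at hm; exact hs hm.symm
          exact ⟨ℓ₂, hc, by rw [hφ'ne ℓ₂ hℓ₂]; exact hm, hu⟩
      have inv1' : ∀ ℓ s, w' ℓ s = u ℓ s ∨ w' ℓ s = 0 := by
        intro ℓ s
        simp only [hw'def]
        split
        · right; rfl
        · split
          · right; rfl
          · exact inv1 ℓ s
      have inv2' : ∀ ℓ, φ' ℓ ≠ V → ∀ s, w' ℓ s = 0 := by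
        intro ℓ hℓ s
        simp only [hw'def]
        split
        · rfl
        · rename_i hne
          split
          · rfl
          · rw [hφ'ne ℓ hne] at hℓ
            exact inv2 ℓ hℓ s
      have inv3' : ∀ ℓ s, s ≠ V → w' ℓ s = 0 →
          u ℓ s ≤ u ℓ (φ' ℓ) ∨ ∃ ℓ₂, C ℓ ℓ₂ ∧ φ' ℓ₂ = s ∧ u ℓ s < u ℓ₂ s := by
        intro ℓ s hs h0
        by_cases hℓ : ℓ = p.1
        · subst hℓ
          rw [hφ'p]
          by_cases hsp : s = p.2
          · subst hsp; left; exact le_refl _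
          · rcases inv1 p.1 s with h | h
            · left; exact hbound p.1 s h
            · rcases inv3 p.1 s hs h with hl | ⟨ℓ₂, hc, hm, hu⟩
              · rw [hφp, huV] at hl
                exact absurd hl (not_le.mpr (hpos p.1 s hs))
              · right
                have hℓ₂ : ℓ₂ ≠ p.1 := by
                  intro he; rw [he, hφp] at hm; exact hs hm.symm
                exact ⟨ℓ₂, hc, by rw [hφ'ne ℓ₂ hℓ₂]; exact hm, hu⟩
        · -- ℓ ≠ p.1
          simp only [hw'def, if_neg hℓ] at h0
          split at h0
          · rename_i hcond
            obtain ⟨hsp, hadj⟩ := hcond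
            have hCℓp : C ℓ p.1 := by
              rcases hadj with h | h
              · exact h
              · exact hsymm h
            rcases inv1 ℓ s with h | h
            · -- w ℓ s = u ℓ s, blocked by new match p
              right
              refine ⟨p.1, hCℓp, by rw [hφ'p, hsp], ?_⟩
              have hle : u ℓ s ≤ u p.1 p.2 := hbound ℓ s h
              rw [← hsp] at hle
              have hne : u ℓ s ≠ u p.1 s :=
                hdist ℓ s p.1 s hs hs (by simp [hℓ])
              exact lt_of_le_of_ne hle hne
            · exact htrans ℓ s hℓ hs h
          · exact htrans ℓ s hℓ hs h0
      have inv4' : Harmonious C V φ' := by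
        intro ℓ₁ ℓ₂ hC hne
        by_cases h1 : ℓ₁ = p.1
        · subst h1
          have h2 : ℓ₂ ≠ p.1 := by
            intro he; rw [he] at hC; exact hirr p.1 hC
          rw [hφ'p, hφ'ne ℓ₂ h2]
          intro he
          have hv : φ ℓ₂ ≠ V := by rw [← he]; exact hp2V
          have h0 := inv5 p.1 ℓ₂ hC hv
          rw [he, h0] at hp
          exact lt_irrefl 0 hp
        · by_cases h2 : ℓ₂ = p.1
          · subst h2
            rw [hφ'p, hφ'ne ℓ₁ h1]
            rw [hφ'ne ℓ₁ h1] at hne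
            intro he
            have h0 := inv5 p.1 ℓ₁ (hsymm hC) hne
            rw [he] at h0
            rw [h0] at hp
            exact lt_irrefl 0 hp
          · rw [hφ'ne ℓ₁ h1, hφ'ne ℓ₂ h2]
            rw [hφ'ne ℓ₁ h1] at hne
            exact inv4 ℓ₁ ℓ₂ hC hne
      have inv5' : ∀ ℓ ℓ₂, C ℓ ℓ₂ → φ' ℓ₂ ≠ V → w' ℓ (φ' ℓ₂) = 0 := by
        intro ℓ ℓ₂ hC hne
        by_cases h2 : ℓ₂ = p.1
        · subst h2
          rw [hφ'p]
          have hℓ : ℓ ≠ p.1 := by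
            intro he; rw [he] at hC; exact hirr p.1 hC
          simp [hw'def, hℓ, hC]
        · rw [hφ'ne ℓ₂ h2]
          rw [hφ'ne ℓ₂ h2] at hne
          have h := inv5 ℓ ℓ₂ hC hne
          simp only [hw'def]
          split
          · rfl
          · split
            · rfl
            · exact h
      have hcard' : (Finset.univ.filter (fun ℓ => φ' ℓ = V)).card ≤ n := by
        have hsub : Finset.univ.filter (fun ℓ => φ' ℓ = V) ⊆
            (Finset.univ.filter (fun ℓ => φ ℓ = V)).erase p.1 := by
          intro ℓ hℓ
          simp only [Finset.mem_filter, Finset.mem_univ, true_and] at hℓ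
          have hℓne : ℓ ≠ p.1 := by
            intro he; rw [he, hφ'p] at hℓ; exact hp2V hℓ
          rw [Finset.mem_erase]
          refine ⟨hℓne, ?_⟩
          simp only [Finset.mem_filter, Finset.mem_univ, true_and]
          rw [← hφ'ne ℓ hℓne]; exact hℓ
        have hpm : p.1 ∈ Finset.univ.filter (fun ℓ => φ ℓ = V) := by
          simp [hφp]
        have := Finset.card_le_card hsub
        rw [Finset.card_erase_of_mem hpm] at this
        omega
      rw [hres]
      exact ih w' φ' inv1' inv2' inv3' inv4' inv5' hcard'
    · have hres : greedyAux C V (n + 1) w φ = φ := by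
        rw [greedyAux]
        simp only [← hpdef, if_neg hp]
      rw [hres]
      refine ⟨inv4, ?_⟩
      intro ℓ₁ s hs hlt
      have hw0 : w ℓ₁ s = 0 := by
        rcases inv1 ℓ₁ s with h | h
        · exfalso
          have h1 : w ℓ₁ s ≤ w p.1 p.2 := argmaxPair_spec w ℓ₁ s
          have h2 : w p.1 p.2 ≤ 0 := not_lt.mp hp
          rw [h] at h1
          exact absurd (lt_of_lt_of_le (hpos ℓ₁ s hs) (le_trans h1 h2)) (lt_irrefl 0)
        · exact h
      rcases inv3 ℓ₁ s hs hw0 with h | h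
      · exact absurd h (not_le.mpr hlt)
      · exact h

/-- The matching produced by DSSAR is a stable polygamy: it is harmonious, and
for every `ℓ₁` and real channel `s` with `u ℓ₁ s > u ℓ₁ (φ ℓ₁)` there is a
neighbor `ℓ₂` of `ℓ₁` matched to `s` with `u ℓ₂ s > u ℓ₁ s`. -/
theorem stmt5 {L S : Type*} [Fintype L] [Fintype S] [Nonempty L] [Nonempty S]
    [DecidableEq L] [DecidableEq S] (C : L → L → Prop) [DecidableRel C]
    (hsymm : Symmetric C) (hirr : Irreflexive C) (V : S)
    (u : L → S → ℝ)
    (hpos : ∀ ℓ s, s ≠ V → 0 < u ℓ s)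
    (huV : ∀ ℓ, u ℓ V = 0)
    (hdist : ∀ ℓ s ℓ' s', s ≠ V → s' ≠ V → (ℓ, s) ≠ (ℓ', s') → u ℓ s ≠ u ℓ' s') :
    Harmonious C V (dssar C V u) ∧
    ∀ ℓ₁ s, s ≠ V → u ℓ₁ (dssar C V u ℓ₁) < u ℓ₁ s →
      ∃ ℓ₂, C ℓ₁ ℓ₂ ∧ dssar C V u ℓ₂ = s ∧ u ℓ₁ s < u ℓ₂ s := by
  have h := greedy_key C hsymm hirr V u hpos huV hdist (Fintype.card L) u (fun _ => V)
    (fun ℓ s => Or.inl rfl)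
    (fun ℓ h => absurd rfl h)
    (fun ℓ s hs h0 => absurd h0 (ne_of_gt (hpos ℓ s hs)))
    (fun ℓ₁ ℓ₂ _ h => absurd rfl h)
    (fun ℓ ℓ₂ _ h => absurd rfl h)
    ((Finset.card_filter_le _ _).trans (le_of_eq Finset.card_univ))
  exact h
end

section
/- For every SPP instance with common utility (distinct positive utilities), a stable polygamy exists. -/
/-- Stable polygamy for the common-utility setting: preferences on both sides
are induced by the utility matrix `u`. -/
def StablePolygamyU {L S : Type*} (C : L → L → Prop) (V : S)
    (u : L → S → ℝ) (φ : L → S) : Prop :=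
  Harmonious C V φ ∧
  ∀ ℓ₁ s, s ≠ V → u ℓ₁ (φ ℓ₁) < u ℓ₁ s →
    ∃ ℓ₂, C ℓ₁ ℓ₂ ∧ φ ℓ₂ = s ∧ u ℓ₁ s < u ℓ₂ s

open Classical in
/-- Number of "real" pairs with strictly higher utility than `p`. -/
noncomputable def mes {L S : Type*} [Fintype L] [Fintype S]
    (u : L → S → ℝ) (V : S) (p : L × S) : ℕ :=
  (Finset.univ.filter fun q : L × S => q.2 ≠ V ∧ u p.1 p.2 < u q.1 q.2).card

/-- Greedy selection: `p` is selected iff `p` is a real pair and no conflicting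
pair of strictly higher utility is selected. -/
noncomputable def sel {L S : Type*} [Fintype L] [Fintype S]
    (C : L → L → Prop) (V : S) (u : L → S → ℝ) (p : L × S) : Prop :=
  p.2 ≠ V ∧ ∀ q : L × S, q.2 ≠ V → u p.1 p.2 < u q.1 q.2 →
    (q.1 = p.1 ∨ (q.2 = p.2 ∧ C p.1 q.1)) → ¬ sel C V u q
termination_by mes u V p
decreasing_by
  classical
  apply Finset.card_lt_card
  constructor
  · intro r hr
    simp only [Finset.mem_filter, Finset.mem_univ, true_and] at hr ⊢
    exact ⟨hr.1, by linarith [hr.2]⟩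
  · intro hsub
    have : q ∈ Finset.univ.filter fun r : L × S => r.2 ≠ V ∧ u p.1 p.2 < u r.1 r.2 := by
      simp only [Finset.mem_filter, Finset.mem_univ, true_and]; exact ⟨by assumption, by assumption⟩
    have := hsub this
    simp only [Finset.mem_filter, Finset.mem_univ, true_and] at this
    exact lt_irrefl _ this.2

theorem sel_iff {L S : Type*} [Fintype L] [Fintype S]
    (C : L → L → Prop) (V : S) (u : L → S → ℝ) (p : L × S) :
    sel C V u p ↔ (p.2 ≠ V ∧ ∀ q : L × S, q.2 ≠ V → u p.1 p.2 < u q.1 q.2 →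
      (q.1 = p.1 ∨ (q.2 = p.2 ∧ C p.1 q.1)) → ¬ sel C V u q) := by
  rw [sel]

/-- For every SPP instance with common utility (distinct positive utilities on
real channels, zero on the virtual channel), a stable polygamy exists. -/
theorem stmt6 {L S : Type*} [Fintype L] [Fintype S]
    (C : L → L → Prop) (hsymm : Symmetric C) (hirr : Irreflexive C) (V : S)
    (u : L → S → ℝ)
    (hpos : ∀ ℓ s, s ≠ V → 0 < u ℓ s)
    (huV : ∀ ℓ, u ℓ V = 0)
    (hdist : ∀ ℓ s ℓ' s', s ≠ V → s' ≠ V → (ℓ, s) ≠ (ℓ', s') → u ℓ s ≠ u ℓ' s') :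
    ∃ φ : L → S, StablePolygamyU C V u φ := by
  classical
  -- uniqueness of selected partner
  have huniq : ∀ ℓ s s', sel C V u (ℓ, s) → sel C V u (ℓ, s') → s = s' := by
    intro ℓ s s' hs hs'
    by_contra hne
    have hsV := ((sel_iff C V u (ℓ, s)).mp hs).1
    have hs'V := ((sel_iff C V u (ℓ, s')).mp hs').1
    have hud : u ℓ s ≠ u ℓ s' := hdist ℓ s ℓ s' hsV hs'V (by simp [hne])
    rcases lt_or_gt_of_ne hud with h | h
    · exact ((sel_iff C V u (ℓ, s)).mp hs).2 (ℓ, s') hs'V h (Or.inl rfl) hs'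
    · exact ((sel_iff C V u (ℓ, s')).mp hs').2 (ℓ, s) hsV h (Or.inl rfl) hs
  set φ : L → S := fun ℓ => if h : ∃ s, sel C V u (ℓ, s) then h.choose else V with hφ
  have hφ_sel : ∀ ℓ s, sel C V u (ℓ, s) → φ ℓ = s := by
    intro ℓ s h
    have hex : ∃ s, sel C V u (ℓ, s) := ⟨s, h⟩
    simp only [hφ, dif_pos hex]
    exact huniq ℓ _ s hex.choose_spec h
  have hφ_nV : ∀ ℓ, φ ℓ ≠ V → sel C V u (ℓ, φ ℓ) := by
    intro ℓ h
    by_cases hex : ∃ s, sel C V u (ℓ, s)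
    · simpa only [hφ_sel ℓ _ hex.choose_spec] using hex.choose_spec
    · exact absurd (by simp [hφ, dif_neg hex]) h
  refine ⟨φ, ?_, ?_⟩
  · -- Harmonious
    intro ℓ₁ ℓ₂ hC hV heq
    have h1 := hφ_nV ℓ₁ hV
    have h2 := hφ_nV ℓ₂ (heq ▸ hV)
    rw [← heq] at h2
    set s := φ ℓ₁
    have hsV : s ≠ V := hV
    have hne : ℓ₁ ≠ ℓ₂ := fun h => hirr ℓ₁ (h ▸ hC)
    have hud : u ℓ₁ s ≠ u ℓ₂ s := hdist ℓ₁ s ℓ₂ s hsV hsV (by simp [hne])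
    rcases lt_or_gt_of_ne hud with h | h
    · exact ((sel_iff C V u (ℓ₁, s)).mp h1).2 (ℓ₂, s) hsV h (Or.inr ⟨rfl, hC⟩) h2
    · exact ((sel_iff C V u (ℓ₂, s)).mp h2).2 (ℓ₁, s) hsV h (Or.inr ⟨rfl, hsymm hC⟩) h1
  · -- stability
    intro ℓ₁ s hsV hlt
    have hnsel : ¬ sel C V u (ℓ₁, s) := by
      intro h
      rw [hφ_sel ℓ₁ s h] at hlt
      exact lt_irrefl _ hlt
    rw [sel_iff] at hnsel
    push_neg at hnsel
    obtain ⟨q, hqV, hqu, hconf, hqsel⟩ := hnsel hsV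
    simp only at hqu hconf
    rcases hconf with h1 | ⟨h2, hC⟩
    · -- q = (ℓ₁, q.2) is selected, so φ ℓ₁ = q.2, contradiction
      exfalso
      have hq : sel C V u (ℓ₁, q.2) := by rw [← h1]; exact hqsel
      have := hφ_sel ℓ₁ q.2 hq
      rw [this] at hlt; rw [h1] at hqu
      linarith
    · refine ⟨q.1, hC, ?_, ?_⟩
      · have hq : sel C V u (q.1, s) := by rw [← h2]; exact hqsel
        exact hφ_sel q.1 s hq
      · rw [h2] at hqu; exact hqu
end

section
/- In the greedy DSSAR algorithm, the sequence of utility values of the pairs selected at successive iterations is strictly decreasing. -/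
/-- The sequence of zero-updated utility matrices produced by the greedy DSSAR
algorithm: at each iteration the maximal pair `(ℓ*, s*)` is selected, and if its
value is positive, the row of `ℓ*` and the entries `(ℓ, s*)` for neighbors `ℓ`
of `ℓ*` are zeroed out. -/
noncomputable def wseq {L S : Type*} [Fintype L] [Fintype S] [Nonempty L] [Nonempty S]
    [DecidableEq L] [DecidableEq S] (C : L → L → Prop) [DecidableRel C]
    (u : L → S → ℝ) : ℕ → (L → S → ℝ)
  | 0 => u
  | n + 1 =>
    let w := wseq C u n
    let p := argmaxPair w
    if 0 < w p.1 p.2 then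
      (fun ℓ s => if ℓ = p.1 then 0
        else if s = p.2 ∧ (C ℓ p.1 ∨ C p.1 ℓ) then 0
        else w ℓ s)
    else w

/-- The utility value of the pair selected at iteration `n` of DSSAR. -/
noncomputable def selVal {L S : Type*} [Fintype L] [Fintype S] [Nonempty L] [Nonempty S]
    [DecidableEq L] [DecidableEq S] (C : L → L → Prop) [DecidableRel C]
    (u : L → S → ℝ) (n : ℕ) : ℝ :=
  wseq C u n (argmaxPair (wseq C u n)).1 (argmaxPair (wseq C u n)).2

lemma argmax_le {L S : Type*} [Fintype L] [Fintype S] [Nonempty L] [Nonempty S]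
    (w : L → S → ℝ) (ℓ : L) (s : S) : w ℓ s ≤ w (argmaxPair w).1 (argmaxPair w).2 := by
  have h := (Finset.exists_max_image (Finset.univ : Finset (L × S)) (fun p => w p.1 p.2)
    Finset.univ_nonempty).choose_spec
  exact h.2 (ℓ, s) (Finset.mem_univ _)

lemma wseq_eq_or_zero {L S : Type*} [Fintype L] [Fintype S] [Nonempty L] [Nonempty S]
    [DecidableEq L] [DecidableEq S] (C : L → L → Prop) [DecidableRel C]
    (u : L → S → ℝ) : ∀ n ℓ s, wseq C u n ℓ s = u ℓ s ∨ wseq C u n ℓ s = 0 := by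
  intro n
  induction n with
  | zero => intro ℓ s; left; rfl
  | succ n ih =>
    intro ℓ s
    simp only [wseq]
    split
    · by_cases h1 : ℓ = (argmaxPair (wseq C u n)).1
      · right; simp [h1]
      · by_cases h2 : s = (argmaxPair (wseq C u n)).2 ∧
            (C ℓ (argmaxPair (wseq C u n)).1 ∨ C (argmaxPair (wseq C u n)).1 ℓ)
        · right; simp [h1, h2]
        · rcases ih ℓ s with h | h
          · left; simp [h1, h2, h]
          · right; simp [h1, h2, h]
    · exact ih ℓ s

/-- In the greedy DSSAR algorithm, the utility values of the pairs selected at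
successive iterations are strictly decreasing. -/
theorem stmt12 {L S : Type*} [Fintype L] [Fintype S] [Nonempty L] [Nonempty S]
    [DecidableEq L] [DecidableEq S] (C : L → L → Prop) [DecidableRel C]
    (hsymm : Symmetric C) (hirr : Irreflexive C) (V : S)
    (u : L → S → ℝ)
    (hpos : ∀ ℓ s, s ≠ V → 0 < u ℓ s)
    (huV : ∀ ℓ, u ℓ V = 0)
    (hdist : ∀ ℓ s ℓ' s', s ≠ V → s' ≠ V → (ℓ, s) ≠ (ℓ', s') → u ℓ s ≠ u ℓ' s') :
    ∀ n : ℕ, 0 < selVal C u (n + 1) → selVal C u (n + 1) < selVal C u n := by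
  intro n hsel
  set w := wseq C u n with hw
  set p := argmaxPair w with hp
  set w' := wseq C u (n + 1) with hw'
  set p' := argmaxPair w' with hp'
  have hsel' : 0 < w' p'.1 p'.2 := hsel
  -- case: no update happened
  by_cases hpos0 : 0 < w p.1 p.2
  · -- update happened
    have hwdef : w' = fun ℓ s => if ℓ = p.1 then 0
        else if s = p.2 ∧ (C ℓ p.1 ∨ C p.1 ℓ) then 0 else w ℓ s := by
      rw [hw']
      simp only [wseq]
      rw [← hw, ← hp]
      simp [hpos0]
    have hne1 : p'.1 ≠ p.1 := by
      intro h
      rw [hwdef] at hsel'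
      simp [h] at hsel'
    have heq : w' p'.1 p'.2 = w p'.1 p'.2 := by
      rw [hwdef]
      simp only [hne1, if_false]
      split
      · exfalso
        rw [hwdef] at hsel'
        simp only [hne1, if_false] at hsel'
        split at hsel' <;> simp_all
      · rfl
    have hwp' : 0 < w p'.1 p'.2 := heq ▸ hsel'
    -- values come from u
    have hup' : w p'.1 p'.2 = u p'.1 p'.2 := by
      rcases wseq_eq_or_zero C u n p'.1 p'.2 with h | h
      · exact h
      · rw [hw] at hwp'; rw [h] at hwp'; exact absurd hwp' (lt_irrefl 0)
    have hup : w p.1 p.2 = u p.1 p.2 := by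
      rcases wseq_eq_or_zero C u n p.1 p.2 with h | h
      · exact h
      · rw [hw] at hpos0; rw [h] at hpos0; exact absurd hpos0 (lt_irrefl 0)
    have hVp' : p'.2 ≠ V := by
      intro h
      rw [hup', h, huV] at hwp'
      exact absurd hwp' (lt_irrefl 0)
    have hVp : p.2 ≠ V := by
      intro h
      rw [hup, h, huV] at hpos0
      exact absurd hpos0 (lt_irrefl 0)
    have hle : w p'.1 p'.2 ≤ w p.1 p.2 := argmax_le w p'.1 p'.2
    have hne : w p'.1 p'.2 ≠ w p.1 p.2 := by
      rw [hup', hup]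
      exact hdist p'.1 p'.2 p.1 p.2 hVp' hVp (by
        intro h
        exact hne1 (congrArg Prod.fst h))
    calc selVal C u (n + 1) = w p'.1 p'.2 := heq
      _ < w p.1 p.2 := lt_of_le_of_ne hle hne
      _ = selVal C u n := rfl
  · -- no update: w' = w
    exfalso
    have hwdef : w' = w := by
      rw [hw']
      simp only [wseq]
      rw [← hw, ← hp]
      simp [hpos0]
    have : w' p'.1 p'.2 ≤ w p.1 p.2 := by
      rw [hwdef]; exact argmax_le w p'.1 p'.2
    linarith [not_lt.mp hpos0]
end

section
/- If the social constraint graph is complete and there are at least as many real channels as individuals (|S \ {V}| ≥ |L|), then in any stable polygamy every ℓ ∈ L is matched to a real channel (no individual is matched to V). -/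
def StablePolygamy {L S : Type*} (C : L → L → Prop) (V : S)
    (rkL : L → S → ℕ) (rkS : S → L → ℕ) (φ : L → S) : Prop :=
  Harmonious C V φ ∧
  ∀ ℓ s, rkL ℓ s < rkL ℓ (φ ℓ) →
    ∃ ℓ', C ℓ ℓ' ∧ φ ℓ' = s ∧ rkS s ℓ' < rkS s ℓ

/-- If the social constraint graph is complete and there are at least as many
real channels as individuals, then in any stable polygamy no individual is
matched to the virtual element `V`. -/
theorem stmt17 {L S : Type*} [Fintype L] [Fintype S] [DecidableEq S]
    (C : L → L → Prop) (V : S)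
    (rkL : L → S → ℕ) (rkS : S → L → ℕ)
    (hinjL : ∀ ℓ, Function.Injective (rkL ℓ))
    (hinjS : ∀ s, Function.Injective (rkS s))
    (hV : ∀ ℓ s, s ≠ V → rkL ℓ s < rkL ℓ V)
    (hirr : Irreflexive C)
    (hcomplete : ∀ ℓ₁ ℓ₂ : L, ℓ₁ ≠ ℓ₂ → C ℓ₁ ℓ₂)
    (hcard : Fintype.card L ≤ Fintype.card {s : S // s ≠ V})
    (φ : L → S) (hstable : StablePolygamy C V rkL rkS φ) :
    ∀ ℓ, φ ℓ ≠ V := by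
  intro ℓ hℓ
  classical
  obtain ⟨hharm, hstab⟩ := hstable
  set I : Finset S := Finset.univ.image φ with hI
  have hVI : V ∈ I := by
    simp only [hI, Finset.mem_image]
    exact ⟨ℓ, Finset.mem_univ _, hℓ⟩
  set R : Finset S := Finset.univ.filter (· ≠ V) with hR
  have hcardR : Fintype.card {s : S // s ≠ V} = R.card := by
    rw [Fintype.card_subtype]
  have hIL : I.card ≤ Fintype.card L := Finset.card_image_le.trans (by simp)
  have hlt : (I.erase V).card < R.card := by
    have h1 : (I.erase V).card = I.card - 1 := Finset.card_erase_of_mem hVI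
    have h2 : 1 ≤ I.card := Finset.card_pos.mpr ⟨V, hVI⟩
    omega
  -- find an unoccupied real channel
  obtain ⟨s, hsR, hsI⟩ : ∃ s ∈ R, s ∉ I.erase V := by
    by_contra h
    push_neg at h
    exact absurd (Finset.card_le_card h) (not_le.mpr hlt)
  have hsV : s ≠ V := by
    simpa [hR] using hsR
  have hsnotI : s ∉ I := fun hmem => hsI (Finset.mem_erase.mpr ⟨hsV, hmem⟩)
  have hpref : rkL ℓ s < rkL ℓ (φ ℓ) := hℓ ▸ hV ℓ s hsV
  obtain ⟨ℓ', _, hφℓ', _⟩ := hstab ℓ s hpref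
  exact hsnotI (Finset.mem_image.mpr ⟨ℓ', Finset.mem_univ _, hφℓ'⟩)
end
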